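/- arXiv:2101.09446 — 5 statements merged into one kernel-verified Lean document; each statement's English description precedes it below -/
import Mathlib

section
/- There exists a Zariski-open dense subset U of the determinantal variety M = {X ∈ ℝ^{m×n} : rank X ≤ r} with the following property: for every X* = [x*_1 ⋯ x*_n] ∈ U and every choice of permutation matrices Π̃_1,…,Π̃_n ∈ 𝒫_m, setting X̃ = [Π̃_1 x*_1 ⋯ Π̃_n x*_n], one has rank [Π_1 x̃_1 ⋯ Π_n x̃_n] ≥ r for every tuple (Π_1,…,Π_n) ∈ 𝒫_m^n, with equality if and only if [Π_1 x̃_1 ⋯ Π_n x̃_n] = Π X* for some single permutation matrix Π ∈ 𝒫_m. -/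
/-- `P` is an `m × m` permutation matrix. -/
def IsPermMatrix {m : ℕ} (P : Matrix (Fin m) (Fin m) ℝ) : Prop :=
  ∃ σ : Equiv.Perm (Fin m), P = σ.permMatrix ℝ

/-- The determinantal variety `M = {X ∈ ℝ^{m×n} : rank X ≤ r}`. -/
def detVar (m n r : ℕ) : Set (Matrix (Fin m) (Fin n) ℝ) :=
  {X | X.rank ≤ r}

/-- Evaluation of a polynomial in the matrix entries at a matrix. -/
noncomputable def polyEval {m n : ℕ} (p : MvPolynomial (Fin m × Fin n) ℝ)
    (X : Matrix (Fin m) (Fin n) ℝ) : ℝ :=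
  MvPolynomial.eval (fun q => X q.1 q.2) p

/-- `U` is a nonempty Zariski-open (hence dense) subset of the determinantal
variety: there are finitely many polynomials in the entries, at least one of
which does not vanish identically on `M`, such that `U` is the set of points
of `M` at which at least one of the polynomials is nonzero. -/
def IsZariskiOpenDense (m n r : ℕ) (U : Set (Matrix (Fin m) (Fin n) ℝ)) : Prop :=
  ∃ (k : ℕ) (ps : Fin k → MvPolynomial (Fin m × Fin n) ℝ),
    (∃ (i : Fin k) (X : Matrix (Fin m) (Fin n) ℝ),
        X ∈ detVar m n r ∧ polyEval (ps i) X ≠ 0) ∧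
    U = {X ∈ detVar m n r | ∃ i : Fin k, polyEval (ps i) X ≠ 0}

/-- Applying a tuple of `m × m` matrices columnwise to an `m × n` matrix:
column `j` of the result is `P j` applied to column `j` of `X`. -/
def colAct {m n : ℕ} (P : Fin n → Matrix (Fin m) (Fin m) ℝ)
    (X : Matrix (Fin m) (Fin n) ℝ) : Matrix (Fin m) (Fin n) ℝ :=
  Matrix.of fun i j => (P j).mulVec (fun i' => X i' j) i

/-!
Genericity is encoded by one polynomial: the sum of squares of the `r`-minors of `X` (forcing
`rank X ≥ r`) times, for each non-constant tuple `σ` of row permutations, the sum of squares of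
the `(r+1)`-minors of `colPerm σ X`, the matrix whose column `j` is permuted by `σ j` (forcing
rank `> r`). For such `X` of rank `r`, a columnwise permutation of `X` keeps rank `r` exactly
when it permutes all columns alike, i.e. it is `Π X`. The polynomial does not vanish on the
determinantal variety: pulled back along `(A, B) ↦ A * B` it is a product of polynomials in a
domain, each of which is nonzero at an explicit pair `(A, B)`.
-/

noncomputable section

open Function MvPolynomial Matrix

namespace Matrix

variable {ι κ α : Type*}

def colPerm (σ : κ → Equiv.Perm ι) (A : Matrix ι κ α) : Matrix ι κ α :=
  of fun i j => A (σ j i) j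

lemma colPerm_colPerm (σ τ : κ → Equiv.Perm ι) (A : Matrix ι κ α) :
    colPerm σ (colPerm τ A) = colPerm (fun j => τ j * σ j) A :=
  rfl

lemma map_colPerm {β : Type*} (σ : κ → Equiv.Perm ι) (A : Matrix ι κ α) (f : α → β) :
    (colPerm σ A).map f = colPerm σ (A.map f) :=
  rfl

lemma colPerm_const [DecidableEq ι] [Fintype ι] [NonAssocSemiring α] (τ : Equiv.Perm ι)
    (A : Matrix ι κ α) : colPerm (const κ τ) A = τ.permMatrix α * A := by
  rw [PEquiv.toMatrix_toPEquiv_mul]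
  rfl

lemma rank_permMatrix_mul [DecidableEq ι] [Fintype ι] [Fintype κ] [CommRing α]
    (τ : Equiv.Perm ι) (A : Matrix ι κ α) : (τ.permMatrix α * A).rank = A.rank := by
  rw [PEquiv.toMatrix_toPEquiv_mul]
  exact rank_submatrix A τ (Equiv.refl κ)

section Field

variable {K : Type*} [Field K] [Fintype κ]

lemma le_rank_of_det_submatrix_ne_zero {k : ℕ} (A : Matrix ι κ K) (f : Fin k → ι)
    (g : Fin k → κ) (h : (A.submatrix f g).det ≠ 0) : k ≤ A.rank := by
  simpa [rank_of_det_ne_zero h] using rank_submatrix_le A f g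

lemma eq_zero_of_rank_eq_zero {A : Matrix ι κ K} (hA : A.rank = 0) : A = 0 := by
  ext i j
  by_contra h
  have := le_rank_of_det_submatrix_ne_zero A (fun _ : Fin 1 => i) (fun _ => j) (by simpa using h)
  omega

lemma le_rank_colPerm_and_rank_colPerm_eq_iff [DecidableEq ι] [Fintype ι] {r : ℕ}
    {X : Matrix ι κ K} (hX : X.rank = r)
    (hgen : ∀ σ : κ → Equiv.Perm ι, (∀ τ, σ ≠ const κ τ) → r < (colPerm σ X).rank)
    (σ : κ → Equiv.Perm ι) :
    r ≤ (colPerm σ X).rank ∧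
      ((colPerm σ X).rank = r ↔ ∃ τ : Equiv.Perm ι, colPerm σ X = τ.permMatrix K * X) := by
  by_cases hσ : ∃ τ, σ = const κ τ
  · obtain ⟨τ, rfl⟩ := hσ
    rw [colPerm_const, rank_permMatrix_mul, hX]
    exact ⟨le_rfl, iff_of_true rfl ⟨τ, rfl⟩⟩
  · have hlt := hgen σ (not_exists.1 hσ)
    refine ⟨hlt.le, iff_of_false hlt.ne' ?_⟩
    rintro ⟨τ, hτ⟩
    rw [hτ, rank_permMatrix_mul] at hlt
    exact hlt.ne hX.symm

end Field

variable [Fintype ι] [Fintype κ]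

def sumSqMinors [CommRing α] (k : ℕ) (A : Matrix ι κ α) : α :=
  ∑ f : Fin k → ι, ∑ g : Fin k → κ, (A.submatrix f g).det ^ 2

lemma _root_.RingHom.map_sumSqMinors {β : Type*} [CommRing α] [CommRing β] (φ : α →+* β)
    (k : ℕ) (A : Matrix ι κ α) : φ (sumSqMinors k A) = sumSqMinors k (A.map φ) := by
  simp [sumSqMinors, RingHom.map_det, submatrix_map]

variable {K : Type*} [Field K] [LinearOrder K] [IsStrictOrderedRing K]

lemma sumSqMinors_ne_zero_iff {k : ℕ} {A : Matrix ι κ K} :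
    sumSqMinors k A ≠ 0 ↔ ∃ (f : Fin k → ι) (g : Fin k → κ), (A.submatrix f g).det ≠ 0 := by
  simp [sumSqMinors, Finset.sum_eq_zero_iff_of_nonneg, Finset.sum_nonneg, sq_nonneg]

lemma le_rank_of_sumSqMinors_ne_zero {k : ℕ} {A : Matrix ι κ K} (h : sumSqMinors k A ≠ 0) :
    k ≤ A.rank :=
  let ⟨f, g, hfg⟩ := sumSqMinors_ne_zero_iff.1 h
  le_rank_of_det_submatrix_ne_zero A f g hfg

lemma sumSqMinors_ne_zero_of_submatrix_eq_one {k : ℕ} {A : Matrix ι κ K} (f : Fin k → ι)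
    (g : Fin k → κ) (h : A.submatrix f g = 1) : sumSqMinors k A ≠ 0 :=
  sumSqMinors_ne_zero_iff.2 ⟨f, g, by simp [h]⟩

end Matrix

variable {m n : ℕ}

lemma colAct_permMatrix (σ : Fin n → Equiv.Perm (Fin m)) (X : Matrix (Fin m) (Fin n) ℝ) :
    colAct (fun j => (σ j).permMatrix ℝ) X = colPerm σ X := by
  ext i j
  simp [colAct, colPerm, permMatrix_mulVec]

lemma colAct_zero (P : Fin n → Matrix (Fin m) (Fin m) ℝ) : colAct P 0 = 0 := by
  ext i j
  exact congrFun (mulVec_zero (P j)) i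

lemma exists_isPermMatrix_iff {p : Matrix (Fin m) (Fin m) ℝ → Prop} :
    (∃ Q, IsPermMatrix Q ∧ p Q) ↔ ∃ τ : Equiv.Perm (Fin m), p (τ.permMatrix ℝ) := by
  simp [IsPermMatrix]

lemma mul_mem_detVar {r : ℕ} (A : Matrix (Fin m) (Fin r) ℝ) (B : Matrix (Fin r) (Fin n) ℝ) :
    A * B ∈ detVar m n r :=
  (rank_mul_le_left A B).trans (rank_le_width A)

lemma isZariskiOpenDense_setOf_polyEval_ne_zero {r : ℕ} {p : MvPolynomial (Fin m × Fin n) ℝ}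
    (h : ∃ X ∈ detVar m n r, polyEval p X ≠ 0) :
    IsZariskiOpenDense m n r {X ∈ detVar m n r | polyEval p X ≠ 0} :=
  let ⟨X, hX, hp⟩ := h
  ⟨1, fun _ => p, ⟨0, X, hX, hp⟩, by simp⟩

def entryVars (m n : ℕ) : Matrix (Fin m) (Fin n) (MvPolynomial (Fin m × Fin n) ℝ) :=
  of fun i j => X (i, j)

lemma polyEval_mul (p q : MvPolynomial (Fin m × Fin n) ℝ) (X : Matrix (Fin m) (Fin n) ℝ) :
    polyEval (p * q) X = polyEval p X * polyEval q X :=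
  map_mul _ p q

lemma polyEval_prod {α : Type*} (s : Finset α) (p : α → MvPolynomial (Fin m × Fin n) ℝ)
    (X : Matrix (Fin m) (Fin n) ℝ) : polyEval (∏ a ∈ s, p a) X = ∏ a ∈ s, polyEval (p a) X :=
  map_prod _ p s

lemma polyEval_sumSqMinors {ι κ : Type*} [Fintype ι] [Fintype κ] (k : ℕ)
    (A : Matrix ι κ (MvPolynomial (Fin m × Fin n) ℝ)) (X : Matrix (Fin m) (Fin n) ℝ) :
    polyEval (sumSqMinors k A) X = sumSqMinors k (A.map (polyEval · X)) :=
  RingHom.map_sumSqMinors _ k A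

lemma entryVars_map_polyEval (X : Matrix (Fin m) (Fin n) ℝ) :
    (entryVars m n).map (polyEval · X) = X := by
  ext i j
  simp [entryVars, polyEval]

lemma polyEval_sumSqMinors_colPerm (k : ℕ) (σ : Fin n → Equiv.Perm (Fin m))
    (X : Matrix (Fin m) (Fin n) ℝ) :
    polyEval (sumSqMinors k (colPerm σ (entryVars m n))) X = sumSqMinors k (colPerm σ X) := by
  rw [polyEval_sumSqMinors, map_colPerm, entryVars_map_polyEval]

/-- Column `c a` of `A * B` is the unit vector at `ρ (τ a) = σ (c a) (w a)`, so column `c a` of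
`colPerm σ (A * B)` is the unit vector at `w a`. -/
lemma exists_colPerm_mul_submatrix_eq_one {ι κ ν μ R : Type*} [Fintype ν] [Fintype μ]
    [DecidableEq ι] [DecidableEq κ] [DecidableEq ν] [DecidableEq μ] [CommSemiring R]
    (σ : κ → Equiv.Perm ι) {w : μ → ι} {c : μ → κ} (hw : Injective w) (hc : Injective c)
    (τ : μ → ν) (ρ : ν → ι) (hρ : ∀ a, ρ (τ a) = σ (c a) (w a)) :
    ∃ (A : Matrix ι ν R) (B : Matrix ν κ R), (colPerm σ (A * B)).submatrix w c = 1 := by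
  refine ⟨of fun i l => if ρ l = i then 1 else 0,
    of fun l j => ∑ a, if τ a = l ∧ c a = j then 1 else 0, ?_⟩
  ext a b
  simp only [submatrix_apply, colPerm, of_apply, mul_apply, hc.eq_iff, one_apply]
  have hB : ∀ l, (∑ x, if τ x = l ∧ x = b then (1 : R) else 0) = if τ b = l then 1 else 0 := by
    intro l
    rw [Finset.sum_eq_single b (fun x _ hx => if_neg fun h => hx h.2) (by simp)]
    simp
  simp_rw [hB, mul_ite, mul_one, mul_zero, Finset.sum_ite_eq, Finset.mem_univ, if_true, hρ,
    (σ (c b)).injective.eq_iff, hw.eq_iff, eq_comm]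

lemma Fin.exists_injective_eq_zero_eq_one {k : ℕ} (hk : k + 2 ≤ m) {u v : Fin m} (huv : u ≠ v) :
    ∃ w : Fin (k + 2) → Fin m, Injective w ∧ w 0 = u ∧ w 1 = v := by
  obtain ⟨π, hπ⟩ := Equiv.Perm.exists_extending_pair
    (fun i : Fin 2 => Fin.castLE hk ⟨i, by omega⟩) ![u, v]
    (fun i j h => by simpa [Fin.ext_iff] using h) (by simp [huv])
  exact ⟨π ∘ Fin.castLE hk, π.injective.comp (Fin.castLE_injective hk), hπ 0, hπ 1⟩

def mulPullback (m n r : ℕ) :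
    MvPolynomial (Fin m × Fin n) ℝ →ₐ[ℝ] MvPolynomial ((Fin m × Fin r) ⊕ (Fin r × Fin n)) ℝ :=
  bind₁ fun q => ∑ k, X (.inl (q.1, k)) * X (.inr (k, q.2))

lemma eval_mulPullback {r : ℕ} (p : MvPolynomial (Fin m × Fin n) ℝ)
    (A : Matrix (Fin m) (Fin r) ℝ) (B : Matrix (Fin r) (Fin n) ℝ) :
    eval (Sum.elim (fun q => A q.1 q.2) (fun q => B q.1 q.2)) (mulPullback m n r p) =
      polyEval p (A * B) := by
  rw [mulPullback, polyEval, ← coe_aeval_eq_eval]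
  exact (aeval_bind₁ _ _ p).trans (by simp [mul_apply])

lemma mulPullback_ne_zero_iff {r : ℕ} {p : MvPolynomial (Fin m × Fin n) ℝ} :
    mulPullback m n r p ≠ 0 ↔
      ∃ (A : Matrix (Fin m) (Fin r) ℝ) (B : Matrix (Fin r) (Fin n) ℝ), polyEval p (A * B) ≠ 0 := by
  constructor
  · intro hp
    contrapose! hp
    refine MvPolynomial.funext fun x => ?_
    rw [map_zero, ← Sum.elim_comp_inl_inr x]
    exact (eval_mulPullback p (of fun i k => x (.inl (i, k))) (of fun k j => x (.inr (k, j)))).trans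
      (hp _ _)
  · rintro ⟨A, B, hAB⟩ hp
    simp [← eval_mulPullback, hp] at hAB

lemma mulPullback_sumSqMinors_colPerm_ne_zero {k r : ℕ} (σ : Fin n → Equiv.Perm (Fin m))
    {w : Fin k → Fin m} {c : Fin k → Fin n} (hw : Injective w) (hc : Injective c)
    (τ : Fin k → Fin r) (ρ : Fin r → Fin m) (hρ : ∀ a, ρ (τ a) = σ (c a) (w a)) :
    mulPullback m n r (sumSqMinors k (colPerm σ (entryVars m n))) ≠ 0 := by
  obtain ⟨A, B, hAB⟩ := exists_colPerm_mul_submatrix_eq_one (R := ℝ) σ hw hc τ ρ hρ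
  refine mulPullback_ne_zero_iff.2 ⟨A, B, ?_⟩
  rw [polyEval_sumSqMinors_colPerm]
  exact sumSqMinors_ne_zero_of_submatrix_eq_one w c hAB

/-- The witness `A * B` has equal columns `j₁ = c 0` and `j₂ = c 1`, both the unit vector at
`σ j₁ u`, which `σ` sends to the distinct rows `u = w 0` and `v = w 1`. -/
lemma mulPullback_sumSqMinors_colPerm_ne_zero_of_forall_ne_const {r : ℕ} (hr : 0 < r)
    (hm : r < m) (hn : r < n) {σ : Fin n → Equiv.Perm (Fin m)} (hσ : ∀ τ, σ ≠ const _ τ) :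
    mulPullback m n r (sumSqMinors (r + 1) (colPerm σ (entryVars m n))) ≠ 0 := by
  obtain ⟨r, rfl⟩ : ∃ r', r = r' + 1 := Nat.exists_eq_add_one.2 hr
  obtain ⟨j₁, j₂, hj⟩ : ∃ j₁ j₂, σ j₁ ≠ σ j₂ := by
    by_contra! h
    exact hσ (σ ⟨0, by omega⟩) (funext fun j => h j _)
  obtain ⟨u, hu⟩ : ∃ u, σ j₁ u ≠ σ j₂ u := by
    by_contra! h
    exact hj (Equiv.ext h)
  obtain ⟨v, hv⟩ : ∃ v, σ j₂ v = σ j₁ u := ⟨_, Equiv.apply_symm_apply _ _⟩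
  have huv : u ≠ v := by
    rintro rfl
    exact hu hv.symm
  obtain ⟨w, hw, hw0, hw1⟩ := Fin.exists_injective_eq_zero_eq_one hm huv
  obtain ⟨c, hc, hc0, hc1⟩ := Fin.exists_injective_eq_zero_eq_one hn (u := j₁) (v := j₂)
    fun h => hj (congrArg σ h)
  refine mulPullback_sumSqMinors_colPerm_ne_zero σ hw hc (Fin.predAbove 0)
    (fun l => σ (c l.succ) (w l.succ)) fun a => ?_
  cases a using Fin.cases with
  | zero => simp [hw0, hw1, hc0, hc1, hv]
  | succ a => rw [Fin.predAbove_zero_succ]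

def uniqueRecoveryPoly (m n r : ℕ) : MvPolynomial (Fin m × Fin n) ℝ :=
  sumSqMinors r (entryVars m n) *
    ∏ σ ∈ Finset.univ.filter fun σ : Fin n → Equiv.Perm (Fin m) => ∀ τ, σ ≠ const _ τ,
      sumSqMinors (r + 1) (colPerm σ (entryVars m n))

lemma exists_mem_detVar_polyEval_uniqueRecoveryPoly_ne_zero {r : ℕ} (hr : 0 < r) (hm : r < m)
    (hn : r < n) : ∃ X ∈ detVar m n r, polyEval (uniqueRecoveryPoly m n r) X ≠ 0 := by
  suffices mulPullback m n r (uniqueRecoveryPoly m n r) ≠ 0 by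
    obtain ⟨A, B, h⟩ := mulPullback_ne_zero_iff.1 this
    exact ⟨A * B, mul_mem_detVar A B, h⟩
  rw [uniqueRecoveryPoly, map_mul, map_prod]
  refine mul_ne_zero ?_ (Finset.prod_ne_zero_iff.2 fun σ hσ => ?_)
  · exact mulPullback_sumSqMinors_colPerm_ne_zero 1 (Fin.castLE_injective hm.le)
      (Fin.castLE_injective hn.le) id (Fin.castLE hm.le) fun _ => rfl
  · exact mulPullback_sumSqMinors_colPerm_ne_zero_of_forall_ne_const hr hm hn
      (Finset.mem_filter.1 hσ).2

lemma le_rank_of_polyEval_uniqueRecoveryPoly_ne_zero {r : ℕ} {X : Matrix (Fin m) (Fin n) ℝ}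
    (h : polyEval (uniqueRecoveryPoly m n r) X ≠ 0) :
    r ≤ X.rank ∧ ∀ σ : Fin n → Equiv.Perm (Fin m), (∀ τ, σ ≠ const _ τ) →
      r < (colPerm σ X).rank := by
  simp only [uniqueRecoveryPoly, polyEval_mul, polyEval_prod, polyEval_sumSqMinors,
    map_colPerm, entryVars_map_polyEval, mul_ne_zero_iff, Finset.prod_ne_zero_iff,
    Finset.mem_filter, Finset.mem_univ, true_and] at h
  exact ⟨le_rank_of_sumSqMinors_ne_zero h.1,
    fun σ hσ => le_rank_of_sumSqMinors_ne_zero (h.2 σ hσ)⟩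

end

/-- **Theorem 1 (UPCA).** There exists a Zariski-open dense subset `U` of the
determinantal variety such that for any `X* ∈ U` and any data
`X̃ = [Π̃₁x₁* ⋯ Π̃ₙxₙ*]`, one has `rank [Π₁x̃₁ ⋯ Πₙx̃ₙ] ≥ r` for every tuple of
permutation matrices, with equality iff `[Π₁x̃₁ ⋯ Πₙx̃ₙ] = Π X*` for a single
permutation matrix `Π`. -/
theorem stmt0 (m n r : ℕ) (hr : r < min m n) :
    ∃ U : Set (Matrix (Fin m) (Fin n) ℝ),
      IsZariskiOpenDense m n r U ∧
      ∀ Xstar ∈ U,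
        ∀ Pt : Fin n → Matrix (Fin m) (Fin m) ℝ, (∀ j, IsPermMatrix (Pt j)) →
        ∀ P : Fin n → Matrix (Fin m) (Fin m) ℝ, (∀ j, IsPermMatrix (P j)) →
          r ≤ (colAct P (colAct Pt Xstar)).rank ∧
          ((colAct P (colAct Pt Xstar)).rank = r ↔
            ∃ Q : Matrix (Fin m) (Fin m) ℝ, IsPermMatrix Q ∧
              colAct P (colAct Pt Xstar) = Q * Xstar) := by
  rcases Nat.eq_zero_or_pos r with rfl | hr₀
  · refine ⟨_, isZariskiOpenDense_setOf_polyEval_ne_zero (p := 1)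
      ⟨0, Matrix.rank_zero.le, by simp [polyEval]⟩, ?_⟩
    rintro X ⟨hX, -⟩ Pt - P -
    obtain rfl := Matrix.eq_zero_of_rank_eq_zero (Nat.le_zero.1 hX)
    simp only [colAct_zero, Matrix.rank_zero, Matrix.mul_zero, le_refl, true_iff, and_true,
      true_and]
    exact ⟨1, 1, Matrix.permMatrix_one.symm⟩
  · obtain ⟨hm, hn⟩ := lt_min_iff.1 hr
    refine ⟨_, isZariskiOpenDense_setOf_polyEval_ne_zero
      (exists_mem_detVar_polyEval_uniqueRecoveryPoly_ne_zero hr₀ hm hn), ?_⟩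
    rintro X ⟨hXM, hX⟩ Pt hPt P hP
    choose πt hπt using hPt
    choose π hπ using hP
    obtain rfl : Pt = _ := funext hπt
    obtain rfl : P = _ := funext hπ
    obtain ⟨hrank, hgen⟩ := le_rank_of_polyEval_uniqueRecoveryPoly_ne_zero hX
    rw [colAct_permMatrix, colAct_permMatrix, Matrix.colPerm_colPerm, exists_isPermMatrix_iff]
    exact Matrix.le_rank_colPerm_and_rank_colPerm_eq_iff (le_antisymm hXM hrank) hgen _
end

section
/- There exists a Zariski-open dense subset U₁ of the complex determinantal variety M_ℂ = {X ∈ ℂ^{m×n} : rank X ≤ r} such that for every X = [x_1 ⋯ x_n] ∈ U₁ and every tuple (Π_1,…,Π_n) ∈ 𝒫_m^n, every m×r column-submatrix of [Π_1 x_1 ⋯ Π_n x_n] has rank r. -/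
/-- `P` is an `m × m` permutation matrix over `ℂ`. -/
def IsPermMatrixC {m : ℕ} (P : Matrix (Fin m) (Fin m) ℂ) : Prop :=
  ∃ σ : Equiv.Perm (Fin m), P = σ.permMatrix ℂ

/-- The complex determinantal variety `M_ℂ = {X ∈ ℂ^{m×n} : rank X ≤ r}`. -/
def detVarC (m n r : ℕ) : Set (Matrix (Fin m) (Fin n) ℂ) :=
  {X | X.rank ≤ r}

/-- Evaluation of a polynomial in the matrix entries at a matrix. -/
noncomputable def polyEvalC {m n : ℕ} (p : MvPolynomial (Fin m × Fin n) ℂ)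
    (X : Matrix (Fin m) (Fin n) ℂ) : ℂ :=
  MvPolynomial.eval (fun q => X q.1 q.2) p

/-- `U` is a nonempty Zariski-open (hence dense) subset of the complex
determinantal variety. -/
def IsZariskiOpenDenseC (m n r : ℕ) (U : Set (Matrix (Fin m) (Fin n) ℂ)) : Prop :=
  ∃ (k : ℕ) (ps : Fin k → MvPolynomial (Fin m × Fin n) ℂ),
    (∃ (i : Fin k) (X : Matrix (Fin m) (Fin n) ℂ),
        X ∈ detVarC m n r ∧ polyEvalC (ps i) X ≠ 0) ∧
    U = {X ∈ detVarC m n r | ∃ i : Fin k, polyEvalC (ps i) X ≠ 0}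

/-- Applying a tuple of `m × m` matrices columnwise to an `m × n` matrix. -/
noncomputable def colActC {m n : ℕ} (P : Fin n → Matrix (Fin m) (Fin m) ℂ)
    (X : Matrix (Fin m) (Fin n) ℂ) : Matrix (Fin m) (Fin n) ℂ :=
  Matrix.of fun i j => (P j).mulVec (fun i' => X i' j) i
/-!
Writing `Πⱼ = (σⱼ).permMatrix`, the top `r × r` block of the column-submatrix of
`[Π₁x₁ ⋯ Πₙxₙ]` on the columns `g 0, …, g (r-1)` is the minor of `X` that takes, in column
`g b`, the rows `σ_{g b} 0, …, σ_{g b} (r-1)`.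
So it suffices that every *columnwise minor* of `X` (`r` distinct columns, and in each of
them an independent choice of `r` distinct rows) is nonzero; `U₁` is where the product of all
of them does not vanish. This product is not identically zero on `M_ℂ`: pulled back along
`(A, B) ↦ A * B` with `A` of width `r`, each factor is a nonzero polynomial, because a suitable
pair of `0/1` matrices makes the corresponding minor of `A * B` the identity, and a product of
nonzero polynomials over a domain is nonzero.
-/

open MvPolynomial

lemma MvPolynomial.exists_forall_eval_ne_zero {K σ ι : Type*} [CommRing K] [IsDomain K]
    [Infinite K] [Finite ι] (p : ι → MvPolynomial σ K) (hp : ∀ i, p i ≠ 0) :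
    ∃ x : σ → K, ∀ i, eval x (p i) ≠ 0 := by
  have := Fintype.ofFinite ι
  have hprod : ∏ i, p i ≠ 0 := Finset.prod_ne_zero_iff.2 fun i _ => hp i
  obtain ⟨x, hx⟩ : ∃ x, eval x (∏ i, p i) ≠ 0 := by
    by_contra! h
    exact hprod (funext fun x => by simp [h x])
  rw [map_prod, Finset.prod_ne_zero_iff] at hx
  exact ⟨x, fun i => hx i (Finset.mem_univ i)⟩

namespace Matrix

variable {ι κ R : Type*} {r : ℕ}

lemma rank_eq_of_det_submatrix_ne_zero {n K : Type*} [Fintype n] [DecidableEq n] [Field K]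
    (A : Matrix ι n K) (e : n → ι) (h : (A.submatrix e id).det ≠ 0) :
    A.rank = Fintype.card n := by
  refine le_antisymm A.rank_le_card_width ?_
  calc Fintype.card n = (A.submatrix e id).rank :=
        (rank_of_isUnit _ ((isUnit_iff_isUnit_det _).2 (isUnit_iff_ne_zero.2 h))).symm
    _ ≤ A.rank := rank_submatrix_le A e id

/-- `r` distinct columns, and in each of them its own choice of `r` distinct rows. -/
abbrev ColumnwiseMinorIndex (ι κ : Type*) (r : ℕ) := (Fin r ↪ κ) × (Fin r → Fin r ↪ ι)

def columnwiseMinor (t : ColumnwiseMinorIndex ι κ r) (X : Matrix ι κ R) :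
    Matrix (Fin r) (Fin r) R :=
  of fun a b => X (t.2 b a) (t.1 b)

lemma map_det_columnwiseMinor {S : Type*} [CommRing R] [CommRing S] (f : R →+* S)
    (t : ColumnwiseMinorIndex ι κ r) (X : Matrix ι κ R) :
    f (columnwiseMinor t X).det = (columnwiseMinor t (X.map f)).det := by
  rw [RingHom.map_det]
  rfl

lemma eval_det_columnwiseMinor_mvPolynomialX [CommRing R] (t : ColumnwiseMinorIndex ι κ r)
    (X : Matrix ι κ R) :
    eval (fun q => X q.1 q.2) (columnwiseMinor t (mvPolynomialX ι κ R)).det =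
      (columnwiseMinor t X).det := by
  rw [map_det_columnwiseMinor]
  exact congrArg (fun Y => (columnwiseMinor t Y).det) (mvPolynomialX_map_eval₂ (RingHom.id R) X)

lemma exists_columnwiseMinor_mul_eq_one [CommSemiring R] [DecidableEq ι] [DecidableEq κ]
    (t : ColumnwiseMinorIndex ι κ r) :
    ∃ (A : Matrix ι (Fin r) R) (B : Matrix (Fin r) κ R), columnwiseMinor t (A * B) = 1 := by
  refine ⟨of fun i c => if i = t.2 c c then 1 else 0, of fun c j => if j = t.1 c then 1 else 0,
    ?_⟩
  ext a b
  simp [columnwiseMinor, mul_apply, t.1.injective.eq_iff, (t.2 _).injective.eq_iff, one_apply]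

variable (ι κ r) in
/-- The product `A * B` of an `ι × r` and an `r × κ` matrix of independent indeterminates. -/
noncomputable def genericProduct [Fintype ι] [CommSemiring R] :
    Matrix ι κ (MvPolynomial ((ι × Fin r) ⊕ (Fin r × κ)) R) :=
  of fun i j => ∑ c, X (Sum.inl (i, c)) * X (Sum.inr (c, j))

lemma genericProduct_map_eval [Fintype ι] [CommSemiring R]
    (x : (ι × Fin r) ⊕ (Fin r × κ) → R) :
    (genericProduct ι κ r).map (eval x) =
      (of fun i c => x (Sum.inl (i, c)) : Matrix ι (Fin r) R) *
        (of fun c j => x (Sum.inr (c, j)) : Matrix (Fin r) κ R) := by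
  ext i j
  simp [genericProduct, mul_apply]

lemma det_columnwiseMinor_genericProduct_ne_zero [Fintype ι] [DecidableEq ι] [DecidableEq κ]
    [CommRing R] [Nontrivial R] (t : ColumnwiseMinorIndex ι κ r) :
    (columnwiseMinor t (genericProduct ι κ r (R := R))).det ≠ 0 := by
  intro h
  obtain ⟨A, B, hAB⟩ := exists_columnwiseMinor_mul_eq_one (R := R) t
  have := congrArg (eval (Sum.elim (fun p => A p.1 p.2) fun p => B p.1 p.2)) h
  rw [map_det_columnwiseMinor, genericProduct_map_eval, map_zero] at this
  change (columnwiseMinor t (A * B)).det = 0 at this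
  rw [hAB, det_one] at this
  exact one_ne_zero this

theorem exists_rank_le_forall_det_columnwiseMinor_ne_zero {K : Type*} [Field K] [Infinite K]
    [Fintype ι] [Fintype κ] (r : ℕ) :
    ∃ X : Matrix ι κ K, X.rank ≤ r ∧
      ∀ t : ColumnwiseMinorIndex ι κ r, (columnwiseMinor t X).det ≠ 0 := by
  classical
  obtain ⟨x, hx⟩ := exists_forall_eval_ne_zero _ (det_columnwiseMinor_genericProduct_ne_zero
    (ι := ι) (κ := κ) (r := r) (R := K))
  refine ⟨(genericProduct ι κ r).map (eval x), ?_, fun t => ?_⟩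
  · rw [genericProduct_map_eval]
    exact (rank_mul_le_left _ _).trans ((rank_le_card_width _).trans_eq (Fintype.card_fin r))
  · rw [← map_det_columnwiseMinor]
    exact hx t

end Matrix

open Matrix

lemma colActC_permMatrix {m n : ℕ} (σ : Fin n → Equiv.Perm (Fin m))
    (X : Matrix (Fin m) (Fin n) ℂ) :
    colActC (fun j => (σ j).permMatrix ℂ) X = of fun i j => X (σ j i) j := by
  ext i j
  simp [colActC, permMatrix_mulVec]

/-- **Lemma 1.** On a Zariski-open dense subset `U₁` of `M_ℂ`, every `m × r`
column-submatrix of `[Π₁x₁ ⋯ Πₙxₙ]` has rank `r`, for every tuple of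
permutation matrices. -/
theorem stmt4 (m n r : ℕ) (hr : r < min m n) :
    ∃ U : Set (Matrix (Fin m) (Fin n) ℂ),
      IsZariskiOpenDenseC m n r U ∧
      ∀ X ∈ U,
        ∀ P : Fin n → Matrix (Fin m) (Fin m) ℂ, (∀ j, IsPermMatrixC (P j)) →
        ∀ g : Fin r → Fin n, Function.Injective g →
          (Matrix.of fun i (k : Fin r) => (colActC P X) i (g k)).rank = r := by
  classical
  let p : MvPolynomial (Fin m × Fin n) ℂ :=
    ∏ t : ColumnwiseMinorIndex (Fin m) (Fin n) r, (columnwiseMinor t (mvPolynomialX _ _ ℂ)).det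
  have hp (X) : polyEvalC p X ≠ 0 ↔
      ∀ t : ColumnwiseMinorIndex _ _ r, (columnwiseMinor t X).det ≠ 0 := by
    simp [p, polyEvalC, map_prod, eval_det_columnwiseMinor_mvPolynomialX, Finset.prod_ne_zero_iff]
  obtain ⟨X₀, hX₀, hX₀p⟩ :=
    exists_rank_le_forall_det_columnwiseMinor_ne_zero (ι := Fin m) (κ := Fin n) (K := ℂ) r
  refine ⟨_, ⟨1, fun _ => p, ⟨0, X₀, hX₀, (hp X₀).2 hX₀p⟩, rfl⟩, ?_⟩
  rintro X ⟨-, _, hX⟩ P hP g hg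
  choose σ hσ using hP
  obtain rfl : P = fun j => (σ j).permMatrix ℂ := funext hσ
  have hm : r ≤ m := (lt_min_iff.1 hr).1.le
  have hminor := (hp X).1 hX (⟨g, hg⟩, fun b => (Fin.castLEEmb hm).trans (σ (g b)).toEmbedding)
  simpa [colActC_permMatrix] using
    rank_eq_of_det_submatrix_ne_zero (of fun i k => X (σ (g k) i) (g k)) (Fin.castLE hm) hminor
end

section
/- There exists a Zariski-open dense subset U₃ of the complex determinantal variety M_ℂ = {X ∈ ℂ^{m×n} : rank X ≤ r} such that for every X = [x_1 ⋯ x_n] ∈ U₃, every j ∈ [n], every subset 𝒥 = {j_1,…,j_r} ⊆ [n] with j ∉ 𝒥, and every choice of permutation matrices Π_1,…,Π_r ∈ 𝒫_m not all equal to the identity, the m×(r+1) matrix [x_j Π_1 x_{j_1} ⋯ Π_r x_{j_r}] has rank r+1. -/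
open Matrix MvPolynomial Function Finset

namespace PermutedColumns

theorem exists_embedding_apply_eq_apply_eq {α β : Type*} [DecidableEq β] (e : α ↪ β) {x y : α}
    (hxy : x ≠ y) {b c : β} (hbc : b ≠ c) : ∃ f : α ↪ β, f x = b ∧ f y = c := by
  set e₁ := e.trans (Equiv.swap (e x) b).toEmbedding
  have hx : e₁ x = b := by simp [e₁]
  have hy : b ≠ e₁ y := hx ▸ e₁.injective.ne hxy
  exact ⟨e₁.trans (Equiv.swap (e₁ y) c).toEmbedding,
    by simp [hx, Equiv.swap_apply_of_ne_of_ne hy hbc], by simp⟩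

theorem rank_eq_card_of_det_submatrix_ne_zero {K ι κ : Type*} [Field K] [Fintype κ]
    [DecidableEq κ] (M : Matrix ι κ K) (s : κ → ι) (h : (M.submatrix s id).det ≠ 0) :
    M.rank = Fintype.card κ := by
  refine le_antisymm M.rank_le_card_width ?_
  rw [← rank_of_isUnit _ ((isUnit_iff_isUnit_det _).2 h.isUnit)]
  exact rank_submatrix_le M s id

variable {m n r : ℕ}

def augmentedMatrix {R : Type*} (X : Matrix (Fin m) (Fin n) R) (j : Fin n) (g : Fin r → Fin n)
    (σ : Fin r → Equiv.Perm (Fin m)) : Matrix (Fin m) (Fin (r + 1)) R :=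
  of fun i => Fin.cons (X i j) fun k => X (σ k i) (g k)

section augmentedMatrix

variable (j : Fin n) (g : Fin r → Fin n) (σ : Fin r → Equiv.Perm (Fin m))

theorem augmentedMatrix_map {R S : Type*} (X : Matrix (Fin m) (Fin n) R) (f : R → S) :
    (augmentedMatrix X j g σ).map f = augmentedMatrix (X.map f) j g σ := by
  ext i k
  exact Fin.cases rfl (fun _ => rfl) k

theorem of_cons_permMatrix_mulVec (X : Matrix (Fin m) (Fin n) ℂ) :
    (of fun i (k : Fin (r + 1)) =>
      Fin.cons (X i j)
        (fun k' : Fin r => ((σ k').permMatrix ℂ).mulVec (fun i' => X i' (g k')) i) k) =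
      augmentedMatrix X j g σ := by
  ext i k
  exact Fin.cases rfl (fun k => by simp [augmentedMatrix, Matrix.permMatrix_mulVec]) k

noncomputable def minorPoly (s : Fin (r + 1) → Fin m) : MvPolynomial (Fin m × Fin n) ℂ :=
  ((augmentedMatrix (mvPolynomialX (Fin m) (Fin n) ℂ) j g σ).submatrix s id).det

theorem polyEvalC_minorPoly (s : Fin (r + 1) → Fin m) (X : Matrix (Fin m) (Fin n) ℂ) :
    polyEvalC (minorPoly j g σ s) X = ((augmentedMatrix X j g σ).submatrix s id).det := by
  rw [polyEvalC, minorPoly, RingHom.map_det, RingHom.mapMatrix_apply, ← submatrix_map,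
    augmentedMatrix_map]
  exact congrArg (fun M => ((augmentedMatrix M j g σ).submatrix s id).det)
    (mvPolynomialX_map_eval₂ _ X)

end augmentedMatrix

def witnessLeft (t : Fin r → Fin m) : Matrix (Fin m) (Fin r) ℂ :=
  of fun i k => if i = t k then 1 else 0

def witnessRight (j : Fin n) (g : Fin r → Fin n) (k₀ : Fin r) : Matrix (Fin r) (Fin n) ℂ :=
  of fun k c => if c = j then (if k = k₀ then 1 else 0) else if c = g k then 1 else 0

theorem mul_witnessRight_apply_self (j : Fin n) (g : Fin r → Fin n)
    (A : Matrix (Fin m) (Fin r) ℂ) (k₀ : Fin r) (i : Fin m) :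
    (A * witnessRight j g k₀) i j = A i k₀ := by
  simp [mul_apply, witnessRight]

theorem mul_witnessRight_apply_apply {j : Fin n} {g : Fin r → Fin n} (hg : Injective g)
    (hgj : ∀ k, g k ≠ j) (A : Matrix (Fin m) (Fin r) ℂ) (k₀ : Fin r) (i : Fin m) (k : Fin r) :
    (A * witnessRight j g k₀) i (g k) = A i k := by
  simp [mul_apply, witnessRight, hgj, hg.eq_iff]

theorem exists_det_augmentedMatrix_mul_ne_zero (hm : r + 1 ≤ m) {j : Fin n} {g : Fin r → Fin n}
    (hg : Injective g) (hgj : ∀ k, g k ≠ j) {σ : Fin r → Equiv.Perm (Fin m)} (hσ : ∃ k, σ k ≠ 1) :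
    ∃ (s : Fin (r + 1) → Fin m) (A : Matrix (Fin m) (Fin r) ℂ) (B : Matrix (Fin r) (Fin n) ℂ),
      ((augmentedMatrix (A * B) j g σ).submatrix s id).det ≠ 0 := by
  obtain ⟨k₀, hk₀⟩ := hσ
  obtain ⟨a, ha⟩ : ∃ a, σ k₀ a ≠ a := by simpa [Equiv.Perm.ext_iff] using hk₀
  obtain ⟨s, hs₀, hs₁⟩ :=
    exists_embedding_apply_eq_apply_eq (Fin.castLEEmb hm) (Fin.succ_ne_zero k₀).symm ha
  set A := witnessLeft fun k => σ k (s k.succ)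
  refine ⟨s, A, witnessRight j g k₀, ?_⟩
  suffices (augmentedMatrix (A * witnessRight j g k₀) j g σ).submatrix s id = 1 by simp [this]
  ext i k
  refine Fin.cases ?_ (fun k => ?_) k
  · simp [A, augmentedMatrix, mul_witnessRight_apply_self, witnessLeft, one_apply, hs₁, ← hs₀,
      s.injective.eq_iff]
  · simp [A, augmentedMatrix, mul_witnessRight_apply_apply hg hgj, witnessLeft, one_apply,
      s.injective.eq_iff]

variable (m n r) in
noncomputable def genericProduct :
    Matrix (Fin m) (Fin n) (MvPolynomial ((Fin m × Fin r) ⊕ (Fin r × Fin n)) ℂ) :=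
  of fun i c => ∑ k, X (Sum.inl (i, k)) * X (Sum.inr (k, c))

theorem eval_bind₁_genericProduct (p : MvPolynomial (Fin m × Fin n) ℂ)
    (v : (Fin m × Fin r) ⊕ (Fin r × Fin n) → ℂ) :
    eval v (bind₁ (fun q => genericProduct m n r q.1 q.2) p) =
      polyEvalC p ((of fun i k => v (Sum.inl (i, k))) * (of fun k c => v (Sum.inr (k, c)))) := by
  rw [polyEvalC, show eval v (bind₁ _ p) =
    eval (fun q => eval v (genericProduct m n r q.1 q.2)) p from eval₂Hom_bind₁ _ _ _ _]
  refine congrArg (fun f => eval f p) (funext fun q => ?_)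
  simp [genericProduct, mul_apply]

theorem exists_mul_polyEvalC_prod_ne_zero {ι : Type*} [Fintype ι]
    (p : ι → MvPolynomial (Fin m × Fin n) ℂ)
    (h : ∀ i, ∃ (A : Matrix (Fin m) (Fin r) ℂ) (B : Matrix (Fin r) (Fin n) ℂ),
      polyEvalC (p i) (A * B) ≠ 0) :
    ∃ (A : Matrix (Fin m) (Fin r) ℂ) (B : Matrix (Fin r) (Fin n) ℂ),
      polyEvalC (∏ i, p i) (A * B) ≠ 0 := by
  set φ := bind₁ fun q : Fin m × Fin n => genericProduct m n r q.1 q.2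
  have hφ (i : ι) : φ (p i) ≠ 0 := fun hi => by
    obtain ⟨A, B, hAB⟩ := h i
    have := eval_bind₁_genericProduct (p i) (Sum.elim (fun x => A x.1 x.2) fun x => B x.1 x.2)
    exact hAB (this.symm.trans (by rw [hi, map_zero]))
  obtain ⟨v, hv⟩ : ∃ v, eval v (φ (∏ i, p i)) ≠ 0 := by
    by_contra! h₀
    rw [map_prod] at h₀
    exact prod_ne_zero_iff.2 (fun i _ => hφ i) (MvPolynomial.funext fun v => by simpa using h₀ v)
  exact ⟨_, _, by rwa [eval_bind₁_genericProduct] at hv⟩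

end PermutedColumns

open PermutedColumns in
theorem stmt6_general (m n r : ℕ) (hm : r + 1 ≤ m) :
    ∃ U : Set (Matrix (Fin m) (Fin n) ℂ),
      IsZariskiOpenDenseC m n r U ∧
      ∀ X ∈ U,
        ∀ j : Fin n,
        ∀ g : Fin r → Fin n, Function.Injective g → (∀ k, g k ≠ j) →
        ∀ P : Fin r → Matrix (Fin m) (Fin m) ℂ, (∀ k, IsPermMatrixC (P k)) →
          (¬ ∀ k, P k = 1) →
          (Matrix.of fun i (k : Fin (r + 1)) =>
            Fin.cons (X i j)
              (fun k' : Fin r => (P k').mulVec (fun i' => X i' (g k')) i) k).rank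
            = r + 1 := by
  classical
  let Config := {c : Fin n × (Fin r → Fin n) × (Fin r → Equiv.Perm (Fin m)) //
    Injective c.2.1 ∧ (∀ k, c.2.1 k ≠ c.1) ∧ ∃ k, c.2.2 k ≠ 1}
  have hwitness (c : Config) := exists_det_augmentedMatrix_mul_ne_zero hm c.2.1 c.2.2.1 c.2.2.2
  choose s A B hAB using hwitness
  let q (c : Config) := minorPoly c.1.1 c.1.2.1 c.1.2.2 (s c)
  obtain ⟨A₀, B₀, hp⟩ := exists_mul_polyEvalC_prod_ne_zero q fun c =>
    ⟨A c, B c, by rw [polyEvalC_minorPoly]; exact hAB c⟩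
  have hrank : A₀ * B₀ ∈ detVarC m n r := (rank_mul_le_left _ _).trans (rank_le_width _)
  refine ⟨{X ∈ detVarC m n r | ∃ _ : Fin 1, polyEvalC (∏ c, q c) X ≠ 0},
    ⟨1, fun _ => ∏ c, q c, ⟨0, A₀ * B₀, hrank, hp⟩, rfl⟩, ?_⟩
  rintro X ⟨-, -, hX⟩ j g hg hgj P hP hP₁
  choose σ hσ using hP
  obtain rfl : P = fun k => (σ k).permMatrix ℂ := funext hσ
  have hσ₁ : ∃ k, σ k ≠ 1 := by
    simpa using fun h : ∀ k, σ k = 1 => hP₁ fun k => by simp [h k]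
  rw [polyEvalC, map_prod, prod_ne_zero_iff] at hX
  have hminor : polyEvalC (q ⟨(j, g, σ), hg, hgj, hσ₁⟩) X ≠ 0 := hX _ (mem_univ _)
  rw [polyEvalC_minorPoly] at hminor
  simpa [of_cons_permMatrix_mulVec] using rank_eq_card_of_det_submatrix_ne_zero _ _ hminor

/-- **Lemma 3.** On a Zariski-open dense subset `U₃` of `M_ℂ`, for every
`j ∈ [n]`, every `𝒥 = {j₁, …, j_r} ⊆ [n]` with `j ∉ 𝒥` and every choice of
permutation matrices `Π₁, …, Π_r` not all the identity, the `m × (r+1)`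
matrix `[x_j  Π₁x_{j₁} ⋯ Π_r x_{j_r}]` has rank `r + 1`. -/
theorem stmt6 (m n r : ℕ) (hm : r + 1 ≤ m) (hn : r + 1 ≤ n) :
    ∃ U : Set (Matrix (Fin m) (Fin n) ℂ),
      IsZariskiOpenDenseC m n r U ∧
      ∀ X ∈ U,
        ∀ j : Fin n,
        ∀ g : Fin r → Fin n, Function.Injective g → (∀ k, g k ≠ j) →
        ∀ P : Fin r → Matrix (Fin m) (Fin m) ℂ, (∀ k, IsPermMatrixC (P k)) →
          (¬ ∀ k, P k = 1) →
          (Matrix.of fun i (k : Fin (r + 1)) =>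
            Fin.cons (X i j)
              (fun k' : Fin r => (P k').mulVec (fun i' => X i' (g k')) i) k).rank
            = r + 1 :=
  stmt6_general m n r hm
end

section
/- Let j ∈ [n], let 𝒥 = {j_1,…,j_r} ⊆ [n] with j ∉ 𝒥, and let Π_1,…,Π_r ∈ 𝒫_m be permutation matrices not all equal to the identity. Assume r+1 ≤ m and r+1 ≤ n. Then there exists a matrix X = [x_1 ⋯ x_n] ∈ ℂ^{m×n} with rank X ≤ r such that the m×(r+1) matrix [x_j Π_1 x_{j_1} ⋯ Π_r x_{j_r}] has rank r+1. -/
open Matrix in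
lemma rank_aux_selector (m s : ℕ) (c : Fin s → Fin m) (hc : Function.Injective c)
    (M : Matrix (Fin m) (Fin s) ℂ)
    (hMdef : M = Matrix.of fun i t => if i = c t then (1 : ℂ) else 0) :
    M.rank = s := by
  classical
  have key : Mᵀ * M = (1 : Matrix (Fin s) (Fin s) ℂ) := by
    ext t t'
    show ∑ i, M i t * M i t' = _
    rw [Finset.sum_eq_single (c t)]
    · simp [hMdef, Matrix.one_apply, hc.eq_iff, eq_comm]
    · intro b _ hb
      simp [hMdef, hb]
    · simp
  have h1 : (Mᵀ * M).rank = s := by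
    rw [key, Matrix.rank_one, Fintype.card_fin]
  refine le_antisymm ?_ ?_
  · calc M.rank ≤ Fintype.card (Fin s) := Matrix.rank_le_card_width M
      _ = s := Fintype.card_fin _
  · calc s = (Mᵀ * M).rank := h1.symm
      _ ≤ M.rank := Matrix.rank_mul_le_right Mᵀ M

/-- **Lemma (nonemptiness of `U_{j,𝒥,Π₁,…,Π_r}`).** Given `j ∈ [n]`,
`𝒥 = {j₁, …, j_r} ⊆ [n]` with `j ∉ 𝒥`, and permutation matrices
`Π₁, …, Π_r` not all the identity, with `r + 1 ≤ m` and `r + 1 ≤ n`, there is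
`X ∈ ℂ^{m×n}` of rank at most `r` such that the `m × (r+1)` matrix
`[x_j  Π₁ x_{j₁} ⋯ Π_r x_{j_r}]` has rank `r + 1`. -/
theorem stmt13 (m n r : ℕ) (hm : r + 1 ≤ m) (hn : r + 1 ≤ n) (j : Fin n)
    (g : Fin r → Fin n) (hg : Function.Injective g) (hgj : ∀ k, g k ≠ j)
    (P : Fin r → Matrix (Fin m) (Fin m) ℂ) (hP : ∀ k, IsPermMatrixC (P k))
    (hP1 : ¬ ∀ k, P k = 1) :
    ∃ X : Matrix (Fin m) (Fin n) ℂ, X.rank ≤ r ∧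
      (Matrix.of fun i (k : Fin (r + 1)) =>
        Fin.cons (X i j)
          (fun k' : Fin r => (P k').mulVec (fun i' => X i' (g k')) i) k).rank
        = r + 1 := by
  classical
  choose σ hσ using hP
  push_neg at hP1
  obtain ⟨k0, hk0⟩ := hP1
  have hσk0 : σ k0 ≠ 1 := by
    intro h
    apply hk0
    rw [hσ k0, h]
    ext i l
    simp [Equiv.Perm.permMatrix, PEquiv.toMatrix, Equiv.toPEquiv, Matrix.one_apply]
  obtain ⟨w, hw⟩ : ∃ w, σ k0 w ≠ w := by
    by_contra h
    push_neg at h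
    exact hσk0 (Equiv.ext h)
  set i0 : Fin m := σ k0 w with hi0def
  have hi0w : i0 ≠ w := hw
  set p1 : Fin (r + 1) := k0.succ with hp1def
  have hp1 : p1 ≠ 0 := Fin.succ_ne_zero k0
  set f : Fin (r + 1) → Fin m := fun t => Fin.castLE hm t with hfdef
  have hf : Function.Injective f := fun a b h => by
    simpa [hfdef, Fin.ext_iff] using h
  set τ1 := Equiv.swap (f 0) i0 with hτ1def
  set y := τ1 (f p1) with hydef
  have hτ1f0 : τ1 (f 0) = i0 := Equiv.swap_apply_left _ _
  have hy : y ≠ i0 := by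
    intro h
    exact hp1 (hf (τ1.injective (h.trans hτ1f0.symm)))
  set τ2 := Equiv.swap y w with hτ2def
  set c : Fin (r + 1) → Fin m := fun t => τ2 (τ1 (f t)) with hcdef
  have hc : Function.Injective c := fun a b h => hf (τ1.injective (τ2.injective h))
  have hc0 : c 0 = i0 := by
    show τ2 (τ1 (f 0)) = i0
    rw [hτ1f0]
    exact Equiv.swap_apply_of_ne_of_ne (Ne.symm hy) hi0w
  have hcp1 : c p1 = w := Equiv.swap_apply_left y w
  set a : Fin r → Fin m := fun k => σ k (c k.succ) with hadef
  have hak0 : a k0 = i0 := by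
    show σ k0 (c p1) = i0
    rw [hcp1]
  set B : Matrix (Fin m) (Fin r) ℂ :=
    Matrix.of fun i k => if i = a k then 1 else 0 with hBdef
  set C : Matrix (Fin r) (Fin n) ℂ :=
    Matrix.of fun k c' => if c' = j then (if k = k0 then 1 else 0)
      else (if c' = g k then 1 else 0) with hCdef
  refine ⟨B * C, ?_, ?_⟩
  · calc (B * C).rank ≤ B.rank := Matrix.rank_mul_le_left B C
      _ ≤ Fintype.card (Fin r) := Matrix.rank_le_card_width B
      _ = r := Fintype.card_fin r
  · have hXj : ∀ i, (B * C) i j = if i = i0 then (1 : ℂ) else 0 := by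
      intro i
      show ∑ k, B i k * C k j = _
      rw [Finset.sum_eq_single k0]
      · simp [hBdef, hCdef, hak0]
      · intro b _ hb
        simp [hBdef, hCdef, hb]
      · simp
    have hXg : ∀ (k' : Fin r) i, (B * C) i (g k') = if i = a k' then (1 : ℂ) else 0 := by
      intro k' i
      show ∑ k, B i k * C k (g k') = _
      rw [Finset.sum_eq_single k']
      · simp [hBdef, hCdef, hgj k']
      · intro b _ hb
        have hgb : g k' ≠ g b := fun h => hb (hg h).symm
        simp [hBdef, hCdef, hgj k', hgb]
      · simp
    have hM : (Matrix.of fun i (k : Fin (r + 1)) =>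
        Fin.cons ((B * C) i j)
          (fun k' : Fin r => (P k').mulVec (fun i' => (B * C) i' (g k')) i) k)
        = Matrix.of fun i t => if i = c t then (1 : ℂ) else 0 := by
      ext i t
      refine Fin.cases ?_ ?_ t
      · simp only [Matrix.of_apply, Fin.cons_zero, hXj, hc0]
      · intro k
        simp only [Matrix.of_apply, Fin.cons_succ]
        rw [hσ k]
        show ∑ i', ((σ k).permMatrix ℂ) i i' * (B * C) i' (g k) = _
        have entry : ∀ b, ((σ k).permMatrix ℂ) i b = if (σ k) i = b then (1 : ℂ) else 0 := by
          intro b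
          simp [Equiv.Perm.permMatrix, PEquiv.toMatrix, Equiv.toPEquiv]
        rw [Finset.sum_eq_single (σ k i)]
        · rw [entry, hXg]
          have hiff : σ k i = a k ↔ i = c k.succ := by
            rw [hadef]
            exact (σ k).apply_eq_iff_eq
          simp [hiff]
        · intro b _ hb
          rw [entry, if_neg (Ne.symm hb), zero_mul]
        · simp
    rw [hM, rank_aux_selector m (r + 1) c hc _ rfl]
end

section
/- Let q be a polynomial with real coefficients in the mn entries of an m×n matrix. If q vanishes at every X ∈ ℝ^{m×n} with rank X ≤ r, then q (viewed as a polynomial with complex coefficients) vanishes at every X ∈ ℂ^{m×n} with rank X ≤ r. -/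
open MvPolynomial

lemma sum_dlt {M : Type*} [AddCommMonoid M] {r k : ℕ} (hk : k ≤ r) (g : Fin k → M) :
    (∑ t : Fin r, if h : (t : ℕ) < k then g ⟨t, h⟩ else 0) = ∑ s : Fin k, g s := by
  have h1 : (∑ t : Fin r, if h : (t : ℕ) < k then g ⟨t, h⟩ else 0)
      = ∑ t ∈ Finset.range r, (if h : t < k then g ⟨t, h⟩ else 0) :=
    Fin.sum_univ_eq_sum_range (fun t => if h : t < k then g ⟨t, h⟩ else 0) r
  have h2 : (∑ s : Fin k, g s)
      = ∑ t ∈ Finset.range k, (if h : t < k then g ⟨t, h⟩ else 0) := by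
    rw [← Fin.sum_univ_eq_sum_range (fun t => if h : t < k then g ⟨t, h⟩ else 0) k]
    exact Finset.sum_congr rfl fun t _ => by simp
  rw [h1, h2]
  exact (Finset.sum_subset (Finset.range_subset_range.2 hk) (by
    intro x hx hxk
    simp only [Finset.mem_range] at hxk
    rw [dif_neg hxk])).symm

lemma rank_factor {m n r : ℕ} (X : Matrix (Fin m) (Fin n) ℂ) (hX : X.rank ≤ r) :
    ∃ (A : Matrix (Fin m) (Fin r) ℂ) (B : Matrix (Fin r) (Fin n) ℂ), X = A * B := by
  set V := LinearMap.range X.mulVecLin with hV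
  have hk : Module.finrank ℂ V ≤ r := hX
  set k := Module.finrank ℂ V with hkdef
  let b : Module.Basis (Fin k) ℂ V := Module.finBasis ℂ V
  have hcol : ∀ j, (fun i => X i j) ∈ V := by
    intro j
    refine ⟨Pi.single j 1, ?_⟩
    ext i
    simp [Matrix.mulVecLin, Matrix.mulVec_single]
  let c : Fin n → V := fun j => ⟨fun i => X i j, hcol j⟩
  refine ⟨fun i t => if h : (t : ℕ) < k then (b ⟨t, h⟩ : Fin m → ℂ) i else 0,
    fun t j => if h : (t : ℕ) < k then b.repr (c j) ⟨t, h⟩ else 0, ?_⟩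
  ext i j
  show X i j = ∑ t : Fin r, ((if h : (t : ℕ) < k then (b ⟨t, h⟩ : Fin m → ℂ) i else 0) *
    (if h : (t : ℕ) < k then b.repr (c j) ⟨t, h⟩ else 0))
  have : (∑ t : Fin r, (if h : (t : ℕ) < k then (b ⟨t, h⟩ : Fin m → ℂ) i else 0) *
      (if h : (t : ℕ) < k then b.repr (c j) ⟨t, h⟩ else 0))
      = ∑ s : Fin k, (b s : Fin m → ℂ) i * b.repr (c j) s := by
    rw [← sum_dlt hk (fun s => (b s : Fin m → ℂ) i * b.repr (c j) s)]
    apply Finset.sum_congr rfl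
    intro t _
    by_cases h : (t : ℕ) < k <;> simp [h]
  rw [this]
  have := b.sum_repr (c j)
  have hcoe : ((∑ s : Fin k, b.repr (c j) s • b s : V) : Fin m → ℂ) i = X i j := by
    rw [this]
  rw [← hcoe]
  push_cast [Submodule.coe_sum]
  simp [Finset.sum_apply, mul_comm]

/-- **Lemma (real-to-complex transfer of vanishing).** If a real polynomial in
the `m·n` matrix entries vanishes at every real matrix of rank at most `r`,
then, viewed as a polynomial with complex coefficients, it vanishes at every
complex matrix of rank at most `r`. -/
theorem stmt15 (m n r : ℕ) (hr : r < min m n)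
    (q : MvPolynomial (Fin m × Fin n) ℝ)
    (hq : ∀ X : Matrix (Fin m) (Fin n) ℝ, X.rank ≤ r →
      MvPolynomial.eval (fun p => X p.1 p.2) q = 0) :
    ∀ X : Matrix (Fin m) (Fin n) ℂ, X.rank ≤ r →
      MvPolynomial.eval (fun p => X p.1 p.2)
        (MvPolynomial.map (algebraMap ℝ ℂ) q) = 0 := by
  -- the substituted polynomial in the entries of A and B
  set s : Fin m × Fin n → MvPolynomial (Fin m × Fin r ⊕ Fin r × Fin n) ℝ :=
    fun ij => ∑ t : Fin r, X (Sum.inl (ij.1, t)) * X (Sum.inr (t, ij.2)) with hs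
  set p : MvPolynomial (Fin m × Fin r ⊕ Fin r × Fin n) ℝ := bind₁ s q with hp
  have hp0 : p = 0 := by
    apply MvPolynomial.funext
    intro v
    rw [hp, show (eval v : MvPolynomial _ ℝ →+* ℝ) ((bind₁ s) q) = aeval v (bind₁ s q) from rfl,
      aeval_bind₁]
    set A : Matrix (Fin m) (Fin r) ℝ := fun i t => v (Sum.inl (i, t)) with hA
    set B : Matrix (Fin r) (Fin n) ℝ := fun t j => v (Sum.inr (t, j)) with hB
    have hrank : (A * B).rank ≤ r :=
      le_trans (Matrix.rank_mul_le_left A B) (le_trans (A.rank_le_card_width) (by simp))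
    have h := hq (A * B) hrank
    rw [map_zero, ← h]
    have harg : (fun i => aeval v (s i)) = fun ij : Fin m × Fin n => (A * B) ij.1 ij.2 := by
      funext ij
      show aeval v (s ij) = (A * B) ij.1 ij.2
      rw [Matrix.mul_apply]
      simp [hs, Matrix.mul_apply, hA, hB]
    rw [show (aeval (fun i => aeval v (s i)) q : ℝ)
      = eval (fun i => aeval v (s i)) q from rfl, harg]
  intro X hX
  obtain ⟨A, B, rfl⟩ := rank_factor X hX
  have key : (MvPolynomial.map (algebraMap ℝ ℂ) p) = 0 := by rw [hp0, map_zero]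
  set w : (Fin m × Fin r ⊕ Fin r × Fin n) → ℂ :=
    Sum.elim (fun it => A it.1 it.2) (fun tj => B tj.1 tj.2) with hw
  have h2 : eval w (MvPolynomial.map (algebraMap ℝ ℂ) p) = 0 := by rw [key, map_zero]
  rw [eval_map] at h2 ⊢
  rw [hp] at h2
  rw [show eval₂ (algebraMap ℝ ℂ) w (bind₁ s q) = aeval w (bind₁ s q) from rfl,
    aeval_bind₁] at h2
  rw [show eval₂ (algebraMap ℝ ℂ) (fun p => (A * B) p.1 p.2) q
    = aeval (fun p => (A * B) p.1 p.2) q from rfl, ← h2]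
  have harg : (fun ij : Fin m × Fin n => (A * B) ij.1 ij.2) = fun i => aeval w (s i) := by
    funext ij
    simp [hs, Matrix.mul_apply, hw]
  rw [harg]
end
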